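/- arXiv:2310.19613 — 7 statements merged into one kernel-verified Lean document; each statement's English description precedes it below -/
import Mathlib

section
/- Every finite rank bounded linear operator T on a Hilbert space H is von Neumann regular in the semigroup 𝒮: there exists a finite rank bounded linear operator A on H such that T ∘ A ∘ T = T. Consequently 𝒮 is a regular semigroup. -/
/-- Every finite rank bounded linear operator on a Hilbert space is von Neumann
regular in the semigroup of finite rank bounded operators: there exists a finite
rank bounded operator `A` with `T ∘ A ∘ T = T`. -/
theorem finiteRank_regular {𝕜 : Type*} [RCLike 𝕜]
    {H : Type*} [NormedAddCommGroup H] [InnerProductSpace 𝕜 H] [CompleteSpace H]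
    (T : H →L[𝕜] H) (hT : FiniteDimensional 𝕜 (LinearMap.range (T : H →ₗ[𝕜] H))) :
    ∃ A : H →L[𝕜] H, FiniteDimensional 𝕜 (LinearMap.range (A : H →ₗ[𝕜] H)) ∧
      T ∘L A ∘L T = T := by
  classical
  set R : Submodule 𝕜 H := LinearMap.range (T : H →ₗ[𝕜] H) with hR
  haveI : FiniteDimensional 𝕜 R := hT
  haveI : CompleteSpace R := FiniteDimensional.complete 𝕜 R
  set b := Module.finBasis 𝕜 R with hb
  -- choose preimages of basis vectors
  have hpre : ∀ i, ∃ x : H, T x = (b i : H) := fun i => (b i).2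
  choose x hx using hpre
  set P : H →L[𝕜] R := R.orthogonalProjectionOnto with hP
  set A : H →L[𝕜] H :=
    ∑ i, ((LinearMap.toContinuousLinearMap (b.coord i)) ∘L P).smulRight (x i) with hA
  refine ⟨A, ?_, ?_⟩
  · -- finite rank of A
    have hle : LinearMap.range (A : H →ₗ[𝕜] H) ≤ Submodule.span 𝕜 (Set.range x) := by
      rintro y ⟨v, rfl⟩
      rw [hA]
      simp only [ContinuousLinearMap.coe_coe, ContinuousLinearMap.sum_apply, ContinuousLinearMap.smulRight_apply]
      exact Submodule.sum_mem _ fun i _ =>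
        Submodule.smul_mem _ _ (Submodule.subset_span ⟨i, rfl⟩)
    haveI : FiniteDimensional 𝕜 (Submodule.span 𝕜 (Set.range x)) :=
      FiniteDimensional.span_of_finite 𝕜 (Set.finite_range x)
    exact Submodule.finiteDimensional_of_le hle
  · ext v
    have hmem : T v ∈ R := LinearMap.mem_range_self _ v
    have hPv : P (T v) = ⟨T v, hmem⟩ :=
      Submodule.orthogonalProjectionOnto_mem_subspace_eq_self (⟨T v, hmem⟩ : R)
    simp only [ContinuousLinearMap.comp_apply, hA, ContinuousLinearMap.sum_apply,
      ContinuousLinearMap.smulRight_apply, LinearMap.coe_toContinuousLinearMap',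
      map_sum, map_smul, hx]
    have : ∑ i, b.coord i (P (T v)) • (b i : H)
        = (R.subtype (∑ i, b.coord i (P (T v)) • b i)) := by
      simp [map_sum, -Module.Basis.sum_repr]
    rw [this, hPv]
    simp [Module.Basis.sum_repr]
end

section
/- Every finite rank linear map T : H → H (not assumed bounded) admits a finite rank linear map A : H → H with T ∘ A ∘ T = T; hence the semigroup of all finite rank linear operators on H (under composition) is a regular semigroup. -/
namespace LinearMap

variable {K V W : Type*} [DivisionRing K] [AddCommGroup V] [Module K V]
  [AddCommGroup W] [Module K W]

theorem exists_finiteDimensional_range_comp_comp_eq_self (f : V →ₗ[K] W)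
    [FiniteDimensional K (range f)] :
    ∃ g : W →ₗ[K] V, FiniteDimensional K (range g) ∧ f ∘ₗ g ∘ₗ f = f := by
  obtain ⟨s, hs⟩ := f.rangeRestrict.exists_rightInverse_of_surjective f.range_rangeRestrict
  obtain ⟨p, hp⟩ := (range f).subtype.exists_leftInverse_of_injective (range f).ker_subtype
  refine ⟨s ∘ₗ p, ?_, ?_⟩
  · exact Submodule.finiteDimensional_of_le (range_comp_le_range p s)
  · have hpf : p ∘ₗ f = f.rangeRestrict := ext fun x ↦ LinearMap.congr_fun hp (f.rangeRestrict x)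
    calc f ∘ₗ (s ∘ₗ p) ∘ₗ f = (range f).subtype ∘ₗ (f.rangeRestrict ∘ₗ s) ∘ₗ p ∘ₗ f := rfl
      _ = f := by rw [hs, id_comp, hpf]; rfl

end LinearMap

theorem finiteRank_linearMap_regular_general {𝕜 : Type*} [RCLike 𝕜]
    {H : Type*} [NormedAddCommGroup H] [InnerProductSpace 𝕜 H]
    (T : H →ₗ[𝕜] H) (hT : FiniteDimensional 𝕜 (LinearMap.range T)) :
    ∃ A : H →ₗ[𝕜] H, FiniteDimensional 𝕜 (LinearMap.range A) ∧
      T ∘ₗ A ∘ₗ T = T :=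
  T.exists_finiteDimensional_range_comp_comp_eq_self

/-- Every finite rank (not necessarily bounded) linear map `T : H → H` admits a
finite rank linear map `A` with `T ∘ A ∘ T = T`; hence the semigroup of all
finite rank linear operators on `H` is regular. -/
theorem finiteRank_linearMap_regular {𝕜 : Type*} [RCLike 𝕜]
    {H : Type*} [NormedAddCommGroup H] [InnerProductSpace 𝕜 H] [CompleteSpace H]
    (T : H →ₗ[𝕜] H) (hT : FiniteDimensional 𝕜 (LinearMap.range T)) :
    ∃ A : H →ₗ[𝕜] H, FiniteDimensional 𝕜 (LinearMap.range A) ∧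
      T ∘ₗ A ∘ₗ T = T :=
  finiteRank_linearMap_regular_general T hT
end

section
/- Let M and N be finite-dimensional subspaces of H, and let T ∈ 𝒮 satisfy M^⊥ ⊆ ker T and range T ⊆ N. Then the map ρ_T from {A ∈ 𝒮 : range A ⊆ M} to {A ∈ 𝒮 : range A ⊆ N} defined by ρ_T(A) = T ∘ A is a bounded linear map between these normed spaces (each equipped with the operator norm), and its operator norm equals ‖T‖. -/
/-- The set `{A ∈ 𝒮 : range A ⊆ M}` of bounded operators on `H` with range
contained in `M`, as a linear subspace of the bounded operators (for `M`
finite-dimensional, every such operator has finite rank, so this is the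
principal left ideal `𝒮 P_M`), normed by the operator norm. -/
def opIdeal (𝕜 : Type*) [RCLike 𝕜] {H : Type*} [NormedAddCommGroup H]
    [InnerProductSpace 𝕜 H] [CompleteSpace H] (M : Submodule 𝕜 H) :
    Submodule 𝕜 (H →L[𝕜] H) where
  carrier := {A | LinearMap.range (A : H →ₗ[𝕜] H) ≤ M}
  add_mem' := by
    rintro a b ha hb x ⟨y, rfl⟩
    exact M.add_mem (ha ⟨y, rfl⟩) (hb ⟨y, rfl⟩)
  zero_mem' := by rintro x ⟨y, rfl⟩; simp
  smul_mem' := by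
    rintro c a ha x ⟨y, rfl⟩
    exact M.smul_mem c (ha ⟨y, rfl⟩)

/-- For finite-dimensional subspaces `M`, `N` of `H` and `T ∈ 𝒮` with
`Mᗮ ⊆ ker T` and `range T ⊆ N`, the map `ρ_T : A ↦ T ∘ A` from
`{A ∈ 𝒮 : range A ⊆ M}` to `{A ∈ 𝒮 : range A ⊆ N}` is a bounded linear map
whose operator norm equals `‖T‖`. -/
theorem rho_isBoundedLinear_norm_eq {𝕜 : Type*} [RCLike 𝕜]
    {H : Type*} [NormedAddCommGroup H] [InnerProductSpace 𝕜 H] [CompleteSpace H]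
    (M N : Submodule 𝕜 H) [FiniteDimensional 𝕜 M] [FiniteDimensional 𝕜 N]
    (T : H →L[𝕜] H) (hfr : FiniteDimensional 𝕜 (LinearMap.range (T : H →ₗ[𝕜] H)))
    (hker : Mᗮ ≤ LinearMap.ker (T : H →ₗ[𝕜] H))
    (hran : LinearMap.range (T : H →ₗ[𝕜] H) ≤ N) :
    ∃ ρ : opIdeal 𝕜 M →L[𝕜] opIdeal 𝕜 N,
      (∀ A : opIdeal 𝕜 M, (ρ A : H →L[𝕜] H) = T ∘L (A : H →L[𝕜] H)) ∧
      @norm _ ContinuousLinearMap.hasOpNorm ρ = ‖T‖ := by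
  classical
  have hmem : ∀ A : opIdeal 𝕜 M, T ∘L (A : H →L[𝕜] H) ∈ opIdeal 𝕜 N := by
    rintro A x ⟨y, rfl⟩
    exact hran ⟨(A : H →L[𝕜] H) y, rfl⟩
  let L : opIdeal 𝕜 M →ₗ[𝕜] opIdeal 𝕜 N :=
    { toFun := fun A => ⟨T ∘L (A : H →L[𝕜] H), hmem A⟩
      map_add' := by intro A B; ext x; simp
      map_smul' := by intro c A; ext x; simp }
  have hbound : ∀ A : opIdeal 𝕜 M, ‖L A‖ ≤ ‖T‖ * ‖A‖ := fun A =>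
    (T.opNorm_comp_le _)
  let ρ : opIdeal 𝕜 M →L[𝕜] opIdeal 𝕜 N := L.mkContinuous ‖T‖ hbound
  refine ⟨ρ, fun A => rfl, ?_⟩
  have hPmem : M.subtypeL ∘L (Submodule.orthogonalProjectionOnto M) ∈ opIdeal 𝕜 M := by
    rintro x ⟨y, rfl⟩
    exact ((Submodule.orthogonalProjectionOnto M) y).2
  set P : opIdeal 𝕜 M := ⟨M.subtypeL ∘L (Submodule.orthogonalProjectionOnto M), hPmem⟩
  have hPnorm : ‖P‖ ≤ 1 := by
    refine ContinuousLinearMap.opNorm_le_bound _ zero_le_one fun x => ?_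
    rw [one_mul]
    calc ‖(Submodule.orthogonalProjectionOnto M x : H)‖
        ≤ ‖Submodule.orthogonalProjectionOnto M‖ * ‖x‖ := (Submodule.orthogonalProjectionOnto M).le_opNorm x
      _ ≤ 1 * ‖x‖ := by gcongr; exact Submodule.orthogonalProjectionOnto_norm_le M
      _ = ‖x‖ := one_mul _
  have hTP : T ∘L (P : H →L[𝕜] H) = T := by
    ext x
    have h0 : T x - T ((Submodule.orthogonalProjectionOnto M x : H)) = 0 := by
      rw [← map_sub]
      exact hker (Submodule.sub_starProjection_mem_orthogonal (K := M) x)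
    simp only [ContinuousLinearMap.comp_apply, Submodule.subtypeL_apply]
    exact (sub_eq_zero.mp h0).symm
  have h1 : ‖ρ P‖ = ‖T‖ := by
    have : ‖ρ P‖ = ‖T ∘L (P : H →L[𝕜] H)‖ := rfl
    rw [this, hTP]
  let _ : SeminormedAddCommGroup (opIdeal 𝕜 M) :=
    @NormedAddCommGroup.toSeminormedAddCommGroup _ (AddSubgroupClass.normedAddCommGroup (opIdeal 𝕜 M))
  let _ : SeminormedAddCommGroup (opIdeal 𝕜 N) :=
    @NormedAddCommGroup.toSeminormedAddCommGroup _ (AddSubgroupClass.normedAddCommGroup (opIdeal 𝕜 N))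
  let _ : NormedSpace 𝕜 (opIdeal 𝕜 M) := SubmoduleClass.toNormedSpace (opIdeal 𝕜 M)
  let _ : NormedSpace 𝕜 (opIdeal 𝕜 N) := SubmoduleClass.toNormedSpace (opIdeal 𝕜 N)
  refine le_antisymm (ρ.opNorm_le_bound (norm_nonneg T) fun A => hbound A) ?_
  calc ‖T‖ = ‖ρ P‖ := h1.symm
    _ ≤ ‖ρ‖ * ‖P‖ := ρ.le_opNorm P
    _ ≤ ‖ρ‖ * 1 := mul_le_mul_of_nonneg_left hPnorm (norm_nonneg ρ)
    _ = ‖ρ‖ := mul_one _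
end

section
/- Let M and N be finite-dimensional subspaces of H, and let T ∈ 𝒮 satisfy M^⊥ ⊆ ker T and range T ⊆ N. Then the map A ↦ T ∘ A from {A ∈ 𝒮 : range A ⊆ M} to {A ∈ 𝒮 : range A ⊆ N} is bijective if and only if the restriction of T to M is a bijective linear map from M onto N. -/
/-- For finite-dimensional subspaces `M`, `N` of `H` and `T ∈ 𝒮` with
`Mᗮ ⊆ ker T` and `range T ⊆ N`, the map `A ↦ T ∘ A` from
`{A ∈ 𝒮 : range A ⊆ M}` to `{A ∈ 𝒮 : range A ⊆ N}` is bijective if and only if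
the restriction of `T` to `M` is a bijective linear map from `M` onto `N`. -/
theorem rho_bijective_iff_restrict_bijective {𝕜 : Type*} [RCLike 𝕜]
    {H : Type*} [NormedAddCommGroup H] [InnerProductSpace 𝕜 H] [CompleteSpace H]
    (M N : Submodule 𝕜 H) [FiniteDimensional 𝕜 M] [FiniteDimensional 𝕜 N]
    (T : H →L[𝕜] H) (hfr : FiniteDimensional 𝕜 (LinearMap.range (T : H →ₗ[𝕜] H)))
    (hker : Mᗮ ≤ LinearMap.ker (T : H →ₗ[𝕜] H)) (hran : LinearMap.range (T : H →ₗ[𝕜] H) ≤ N) :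
    Set.BijOn (fun A : H →L[𝕜] H => T ∘L A)
        {A | LinearMap.range (A : H →ₗ[𝕜] H) ≤ M} {A | LinearMap.range (A : H →ₗ[𝕜] H) ≤ N} ↔
      Function.Bijective
        ((T : H →ₗ[𝕜] H).restrict
          (fun x (_ : x ∈ M) => hran (LinearMap.mem_range_self _ x) : ∀ x ∈ M, T x ∈ N)) := by
  set T' := (T : H →ₗ[𝕜] H).restrict
      (fun x (_ : x ∈ M) => hran (LinearMap.mem_range_self _ x) : ∀ x ∈ M, T x ∈ N) with hT'
  constructor
  · rintro ⟨hmaps, hinj, hsurj⟩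
    constructor
    · -- injectivity of the restriction
      intro m m' hmm'
      have hTval : T (m : H) = T (m' : H) := by
        simpa [hT'] using congrArg Subtype.val hmm'
      set d : H := (m : H) - (m' : H) with hd
      have hdM : d ∈ M := sub_mem m.2 m'.2
      have hTd : T d = 0 := by simp [hd, map_sub, hTval]
      by_cases hdz : d = 0
      · exact Subtype.ext (by rwa [sub_eq_zero] at hdz)
      · exfalso
        set A : H →L[𝕜] H := (innerSL 𝕜 d).smulRight d with hA
        have hAM : LinearMap.range (A : H →ₗ[𝕜] H) ≤ M := by
          rintro _ ⟨x, rfl⟩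
          exact M.smul_mem _ hdM
        have h0M : LinearMap.range ((0 : H →L[𝕜] H) : H →ₗ[𝕜] H) ≤ M := by
          rintro _ ⟨x, rfl⟩; simp
        have hTA : T ∘L A = T ∘L 0 := by
          ext x
          simp [hA, hTd]
        have hA0 : A = 0 := hinj hAM h0M hTA
        have hAd : (inner 𝕜 d d : 𝕜) • d = 0 := by
          have := congrArg (fun f : H →L[𝕜] H => f d) hA0
          simpa [hA] using this
        rcases smul_eq_zero.mp hAd with h | h
        · exact hdz (inner_self_eq_zero.mp h)
        · exact hdz h
    · -- surjectivity of the restriction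
      intro n
      by_cases hn : (n : H) = 0
      · refine ⟨0, ?_⟩
        rw [map_zero]
        exact (Subtype.ext hn).symm
      · set B : H →L[𝕜] H := (innerSL 𝕜 (n : H)).smulRight (n : H) with hB
        have hBN : B ∈ {A : H →L[𝕜] H | LinearMap.range (A : H →ₗ[𝕜] H) ≤ N} := by
          rintro _ ⟨x, rfl⟩
          exact N.smul_mem _ n.2
        obtain ⟨A, hAM, hTA⟩ := hsurj hBN
        have hc : (inner 𝕜 (n : H) (n : H) : 𝕜) ≠ 0 := fun h => hn (inner_self_eq_zero.mp h)
        have hTAn : T (A (n : H)) = (inner 𝕜 (n : H) (n : H) : 𝕜) • (n : H) := by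
          have := congrArg (fun f : H →L[𝕜] H => f (n : H)) hTA
          simpa [hB] using this
        have hmM : (inner 𝕜 (n : H) (n : H) : 𝕜)⁻¹ • A (n : H) ∈ M :=
          M.smul_mem _ (hAM ⟨(n : H), rfl⟩)
        refine ⟨⟨_, hmM⟩, Subtype.ext ?_⟩
        show T ((inner 𝕜 (n : H) (n : H) : 𝕜)⁻¹ • A (n : H)) = (n : H)
        rw [map_smul, hTAn, smul_smul, inv_mul_cancel₀ hc, one_smul]
  · intro hbij
    set e := LinearEquiv.ofBijective T' hbij with he
    refine ⟨?_, ?_, ?_⟩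
    · intro A hA
      rintro _ ⟨x, rfl⟩
      exact hran ⟨A x, rfl⟩
    · intro A hA A' hA' hEq
      ext x
      have h1 : A x ∈ M := hA ⟨x, rfl⟩
      have h2 : A' x ∈ M := hA' ⟨x, rfl⟩
      have hTx : T' ⟨A x, h1⟩ = T' ⟨A' x, h2⟩ := by
        apply Subtype.ext
        simpa [hT'] using congrArg (fun f : H →L[𝕜] H => f x) hEq
      exact congrArg Subtype.val (hbij.1 hTx)
    · intro B hB
      set einv : N →L[𝕜] M := LinearMap.toContinuousLinearMap (e.symm : N →ₗ[𝕜] M) with heinv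
      set S : H →L[𝕜] N := B.codRestrict N (fun x => hB ⟨x, rfl⟩) with hS
      refine ⟨M.subtypeL ∘L (einv ∘L S), ?_, ?_⟩
      · rintro _ ⟨x, rfl⟩
        exact (einv (S x)).2
      · ext x
        show T ((e.symm (S x) : M) : H) = B x
        have h1 : T' (e.symm (S x)) = S x := by
          have := e.apply_symm_apply (S x)
          simpa [he, LinearEquiv.ofBijective_apply] using this
        have h2 := congrArg Subtype.val h1
        simpa [hT', hS] using h2
end

section
/- Let M ⊆ N be finite-dimensional subspaces of H. If Q is a bounded idempotent linear operator on H (Q ∘ Q = Q) with range Q = M, N^⊥ ⊆ ker Q, and ‖Q‖ = 1, then Q = P_M, the orthogonal projection of H onto M. -/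
/-- Let `M ⊆ N` be finite-dimensional subspaces of `H`. A bounded idempotent
operator `Q` on `H` with range `M`, with `Nᗮ ⊆ ker Q` and `‖Q‖ = 1` must be the
orthogonal projection of `H` onto `M`. -/
theorem idempotent_norm_one_eq_orthogonalProjection {𝕜 : Type*} [RCLike 𝕜]
    {H : Type*} [NormedAddCommGroup H] [InnerProductSpace 𝕜 H] [CompleteSpace H]
    (M N : Submodule 𝕜 H) [FiniteDimensional 𝕜 M] [FiniteDimensional 𝕜 N]
    (hMN : M ≤ N) (Q : H →L[𝕜] H) (hidem : Q ∘L Q = Q)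
    (hran : LinearMap.range (Q : H →ₗ[𝕜] H) = M) (hker : Nᗮ ≤ LinearMap.ker (Q : H →ₗ[𝕜] H))
    (hnorm : ‖Q‖ = 1) :
    Q = M.subtypeL ∘L M.orthogonalProjectionOnto := by
  -- Q fixes elements of M
  have hfix : ∀ m ∈ M, Q m = m := by
    intro m hm
    rw [← hran] at hm
    obtain ⟨z, rfl⟩ := hm
    have := congrArg (fun T : H →L[𝕜] H => T z) hidem
    simpa using this
  -- ker Q ⊆ Mᗮ
  have hkerM : (LinearMap.ker (Q : H →ₗ[𝕜] H) : Submodule 𝕜 H) ≤ Mᗮ := by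
    intro y hy
    rw [Submodule.mem_orthogonal]
    intro m hm
    have key : ‖m - 0‖ = ⨅ w : (LinearMap.ker (Q : H →ₗ[𝕜] H) : Submodule 𝕜 H), ‖m - w‖ := by
      apply le_antisymm
      · apply le_ciInf
        intro w
        have hw : Q w = 0 := w.2
        have : Q (m - w) = m := by rw [map_sub, hfix m hm, hw, sub_zero]
        calc ‖m - 0‖ = ‖Q (m - (w : H))‖ := by rw [this, sub_zero]
          _ ≤ ‖Q‖ * ‖m - (w : H)‖ := Q.le_opNorm _
          _ = ‖m - (w : H)‖ := by rw [hnorm, one_mul]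
      · exact ciInf_le ⟨0, fun x ⟨w, hw⟩ => hw ▸ norm_nonneg _⟩
          (⟨0, (LinearMap.ker (Q : H →ₗ[𝕜] H)).zero_mem⟩ : (LinearMap.ker (Q : H →ₗ[𝕜] H) : Submodule 𝕜 H))
    have := (Submodule.norm_eq_iInf_iff_inner_eq_zero (𝕜 := 𝕜)
      (LinearMap.ker (Q : H →ₗ[𝕜] H) : Submodule 𝕜 H) ((LinearMap.ker (Q : H →ₗ[𝕜] H)).zero_mem)).1 key
    have h0 := this y hy
    rwa [sub_zero] at h0
  ext x
  have hmem : Q x ∈ M := hran ▸ LinearMap.mem_range_self _ x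
  have horth : x - Q x ∈ Mᗮ := by
    apply hkerM
    have := congrArg (fun T : H →L[𝕜] H => T x) hidem
    simp only [ContinuousLinearMap.comp_apply] at this
    simp only [LinearMap.mem_ker, map_sub, this, sub_self, ContinuousLinearMap.coe_coe]
  have := Submodule.eq_starProjection_of_mem_orthogonal (u := x) hmem horth
  rw [← this]
  rfl
end

section
/- For T₁, T₂ ∈ 𝒮, there exists A ∈ 𝒮 with T₁ = T₂ ∘ A if and only if range T₁ ⊆ range T₂. (Equivalently, in the paper's multiplication, the principal left ideal 𝒮T₁ is contained in 𝒮T₂ if and only if R(T₁) ⊆ R(T₂).) -/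
/-- For finite rank bounded operators `T₁, T₂` on `H`, there is a finite rank
bounded operator `A` with `T₁ = T₂ ∘ A` if and only if
`range T₁ ⊆ range T₂` (the principal left ideal `𝒮T₁` is contained in `𝒮T₂`
iff `R(T₁) ⊆ R(T₂)`). -/
theorem leftIdeal_le_iff_range_le {𝕜 : Type*} [RCLike 𝕜]
    {H : Type*} [NormedAddCommGroup H] [InnerProductSpace 𝕜 H] [CompleteSpace H]
    (T₁ T₂ : H →L[𝕜] H) (h₁ : FiniteDimensional 𝕜 (LinearMap.range (T₁ : H →ₗ[𝕜] H)))
    (h₂ : FiniteDimensional 𝕜 (LinearMap.range (T₂ : H →ₗ[𝕜] H))) :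
    (∃ A : H →L[𝕜] H, FiniteDimensional 𝕜 (LinearMap.range (A : H →ₗ[𝕜] H)) ∧ T₁ = T₂ ∘L A) ↔
      LinearMap.range (T₁ : H →ₗ[𝕜] H) ≤ LinearMap.range (T₂ : H →ₗ[𝕜] H) := by
  constructor
  · rintro ⟨A, -, rfl⟩
    rintro x ⟨y, rfl⟩
    exact ⟨A y, rfl⟩
  · intro hle
    -- V = orthogonal complement of ker T₂
    set V : Submodule 𝕜 H := (LinearMap.ker (T₂ : H →ₗ[𝕜] H))ᗮ with hV
    -- map from V to range T₂
    have hmem : ∀ v : V, T₂ v ∈ LinearMap.range (T₂ : H →ₗ[𝕜] H) := fun v => ⟨v, rfl⟩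
    let g : V →ₗ[𝕜] LinearMap.range (T₂ : H →ₗ[𝕜] H) :=
      LinearMap.codRestrict (LinearMap.range (T₂ : H →ₗ[𝕜] H))
        ((T₂ : H →ₗ[𝕜] H).comp V.subtype) hmem
    have hginj : Function.Injective g := by
      rw [← LinearMap.ker_eq_bot, Submodule.eq_bot_iff]
      rintro ⟨v, hv⟩ hgv
      have hT₂v : T₂ v = 0 := congrArg Subtype.val hgv
      have hv0 : v = 0 :=
        Submodule.disjoint_def.mp (LinearMap.ker (T₂ : H →ₗ[𝕜] H)).orthogonal_disjoint v hT₂v hv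
      simpa using hv0
    have hgsurj : Function.Surjective g := by
      rintro ⟨y, x, rfl⟩
      obtain ⟨p, hp, q, hq, rfl⟩ := (LinearMap.ker (T₂ : H →ₗ[𝕜] H)).exists_add_mem_mem_orthogonal x
      refine ⟨⟨q, hq⟩, ?_⟩
      apply Subtype.ext
      simp [g, LinearMap.mem_ker.mp hp, map_add]
      rfl
    have : FiniteDimensional 𝕜 V := FiniteDimensional.of_injective g hginj
    let e : V ≃ₗ[𝕜] LinearMap.range (T₂ : H →ₗ[𝕜] H) := LinearEquiv.ofBijective g ⟨hginj, hgsurj⟩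
    -- build A
    let T₁' : H →L[𝕜] LinearMap.range (T₂ : H →ₗ[𝕜] H) :=
      T₁.codRestrict (LinearMap.range (T₂ : H →ₗ[𝕜] H)) (fun x => hle ⟨x, rfl⟩)
    let S : LinearMap.range (T₂ : H →ₗ[𝕜] H) →L[𝕜] H :=
      (V.subtype ∘ₗ e.symm.toLinearMap).toContinuousLinearMap
    refine ⟨S.comp T₁', ?_, ?_⟩
    · have hr : LinearMap.range ((S.comp T₁' : H →L[𝕜] H) : H →ₗ[𝕜] H) ≤ V := by
        rintro x ⟨y, rfl⟩
        exact (e.symm (T₁' y)).2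
      exact Submodule.finiteDimensional_of_le hr
    · ext x
      have key : T₂ ((e.symm (T₁' x) : V) : H) = T₁ x := by
        have h2 : g (e.symm (T₁' x)) = T₁' x := e.apply_symm_apply (T₁' x)
        calc T₂ ((e.symm (T₁' x) : V) : H) = (g (e.symm (T₁' x)) : H) := rfl
          _ = ((T₁' x : LinearMap.range (T₂ : H →ₗ[𝕜] H)) : H) := by rw [h2]
          _ = T₁ x := rfl
      simpa [S, T₁'] using key.symm
end

section
/- For T₁, T₂ ∈ 𝒮: the sets {T₁ ∘ A : A ∈ 𝒮} and {T₂ ∘ A : A ∈ 𝒮} are equal if and only if range T₁ = range T₂; and the sets {A ∘ T₁ : A ∈ 𝒮} and {A ∘ T₂ : A ∈ 𝒮} are equal if and only if ker T₁ = ker T₂. -/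
/-- A finite-rank operator has a finite-rank "pseudoinverse" `S` with
`T (S y) = y` for every `y` in the range of `T`. -/
lemma exists_pseudoinverse {𝕜 : Type*} [RCLike 𝕜]
    {H : Type*} [NormedAddCommGroup H] [InnerProductSpace 𝕜 H] [CompleteSpace H]
    (T : H →L[𝕜] H) (hT : FiniteDimensional 𝕜 (LinearMap.range (T : H →ₗ[𝕜] H))) :
    ∃ S : H →L[𝕜] H, FiniteDimensional 𝕜 (LinearMap.range (S : H →ₗ[𝕜] H)) ∧
      ∀ y ∈ LinearMap.range (T : H →ₗ[𝕜] H), T (S y) = y := by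
  set K : Submodule 𝕜 H := LinearMap.range (T : H →ₗ[𝕜] H) with hK
  haveI : FiniteDimensional 𝕜 K := hT
  -- right inverse of the range restriction
  have hsurj : LinearMap.range (T : H →ₗ[𝕜] H).rangeRestrict = ⊤ :=
    LinearMap.range_rangeRestrict _
  obtain ⟨g, hg⟩ :=
    LinearMap.exists_rightInverse_of_surjective (T : H →ₗ[𝕜] H).rangeRestrict hsurj
  have hrange : LinearMap.range (T : H →ₗ[𝕜] H) = K := rfl
  let g' : K →ₗ[𝕜] H := hrange ▸ g
  -- g : range ↑T →ₗ H ; identify range ↑T with K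
  have hgK : ∀ z : LinearMap.range (T : H →ₗ[𝕜] H), T (g z) = (z : H) := by
    intro z
    have := LinearMap.congr_fun hg z
    simpa [LinearMap.rangeRestrict, Subtype.ext_iff] using congrArg Subtype.val this
  haveI : FiniteDimensional 𝕜 (LinearMap.range (T : H →ₗ[𝕜] H)) := hT
  let gL : (LinearMap.range (T : H →ₗ[𝕜] H)) →L[𝕜] H := LinearMap.toContinuousLinearMap g
  let P : H →L[𝕜] (LinearMap.range (T : H →ₗ[𝕜] H)) :=
    (LinearMap.range (T : H →ₗ[𝕜] H)).orthogonalProjectionOnto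
  refine ⟨gL ∘L P, ?_, ?_⟩
  · have hle : LinearMap.range ((gL ∘L P) : H →ₗ[𝕜] H) ≤ LinearMap.range (g : _ →ₗ[𝕜] H) := by
      rintro x ⟨y, rfl⟩
      exact ⟨P y, rfl⟩
    exact Submodule.finiteDimensional_of_le hle
  · intro y hy
    have hy' : y ∈ LinearMap.range (T : H →ₗ[𝕜] H) := hy
    have hP : P y = ⟨y, hy'⟩ := Submodule.orthogonalProjectionOnto_mem_subspace_eq_self ⟨y, hy'⟩
    show T (gL (P y)) = y
    rw [hP]
    exact hgK ⟨y, hy'⟩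


lemma fd_range_comp {𝕜 : Type*} [RCLike 𝕜]
    {H : Type*} [NormedAddCommGroup H] [InnerProductSpace 𝕜 H]
    (g f : H →L[𝕜] H) (hg : FiniteDimensional 𝕜 (LinearMap.range (g : H →ₗ[𝕜] H))) :
    FiniteDimensional 𝕜 (LinearMap.range ((g ∘L f) : H →ₗ[𝕜] H)) := by
  haveI := hg
  have hle : LinearMap.range ((g ∘L f) : H →ₗ[𝕜] H) ≤ LinearMap.range (g : H →ₗ[𝕜] H) := by
    rintro x ⟨y, rfl⟩
    exact ⟨f y, rfl⟩
  exact Submodule.finiteDimensional_of_le hle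

/-- The left-ideal inclusion from range inclusion. -/
lemma left_ideal_subset {𝕜 : Type*} [RCLike 𝕜]
    {H : Type*} [NormedAddCommGroup H] [InnerProductSpace 𝕜 H] [CompleteSpace H]
    (T₁ T₂ : H →L[𝕜] H) (h₂ : FiniteDimensional 𝕜 (LinearMap.range (T₂ : H →ₗ[𝕜] H)))
    (hle : LinearMap.range (T₁ : H →ₗ[𝕜] H) ≤ LinearMap.range (T₂ : H →ₗ[𝕜] H)) :
    {B : H →L[𝕜] H | ∃ A : H →L[𝕜] H,
        FiniteDimensional 𝕜 (LinearMap.range (A : H →ₗ[𝕜] H)) ∧ B = T₁ ∘L A} ⊆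
    {B : H →L[𝕜] H | ∃ A : H →L[𝕜] H,
        FiniteDimensional 𝕜 (LinearMap.range (A : H →ₗ[𝕜] H)) ∧ B = T₂ ∘L A} := by
  obtain ⟨S, hS, hSid⟩ := exists_pseudoinverse T₂ h₂
  rintro B ⟨A, hA, rfl⟩
  refine ⟨S ∘L T₁ ∘L A, ?_, ?_⟩
  · exact fd_range_comp S (T₁ ∘L A) hS
  · ext x
    exact (hSid (T₁ (A x)) (hle ⟨A x, rfl⟩)).symm

/-- The right-ideal inclusion from kernel inclusion. -/
lemma right_ideal_subset {𝕜 : Type*} [RCLike 𝕜]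
    {H : Type*} [NormedAddCommGroup H] [InnerProductSpace 𝕜 H] [CompleteSpace H]
    (T₁ T₂ : H →L[𝕜] H) (h₂ : FiniteDimensional 𝕜 (LinearMap.range (T₂ : H →ₗ[𝕜] H)))
    (hle : LinearMap.ker (T₂ : H →ₗ[𝕜] H) ≤ LinearMap.ker (T₁ : H →ₗ[𝕜] H)) :
    {B : H →L[𝕜] H | ∃ A : H →L[𝕜] H,
        FiniteDimensional 𝕜 (LinearMap.range (A : H →ₗ[𝕜] H)) ∧ B = A ∘L T₁} ⊆
    {B : H →L[𝕜] H | ∃ A : H →L[𝕜] H,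
        FiniteDimensional 𝕜 (LinearMap.range (A : H →ₗ[𝕜] H)) ∧ B = A ∘L T₂} := by
  obtain ⟨S, hS, hSid⟩ := exists_pseudoinverse T₂ h₂
  rintro B ⟨A, hA, rfl⟩
  refine ⟨(A ∘L T₁) ∘L S, ?_, ?_⟩
  · exact fd_range_comp (A ∘L T₁) S (fd_range_comp A T₁ hA)
  · ext x
    show A (T₁ x) = A (T₁ (S (T₂ x)))
    have h1 : T₂ (S (T₂ x)) = T₂ x := hSid (T₂ x) ⟨x, rfl⟩
    have h2 : T₁ (S (T₂ x)) = T₁ x := by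
      have : S (T₂ x) - x ∈ LinearMap.ker (T₂ : H →ₗ[𝕜] H) := by
        simp [LinearMap.mem_ker, map_sub, h1]
      have := hle this
      rw [LinearMap.mem_ker, map_sub, sub_eq_zero] at this
      exact this
    rw [h2]

/-- For finite rank bounded operators `T₁, T₂` on `H`: the principal left
ideals `{T₁ ∘ A : A ∈ 𝒮}` and `{T₂ ∘ A : A ∈ 𝒮}` coincide iff
`range T₁ = range T₂`, and the principal right ideals `{A ∘ T₁ : A ∈ 𝒮}` and
`{A ∘ T₂ : A ∈ 𝒮}` coincide iff `ker T₁ = ker T₂`. -/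
theorem principal_ideals_eq_iff {𝕜 : Type*} [RCLike 𝕜]
    {H : Type*} [NormedAddCommGroup H] [InnerProductSpace 𝕜 H] [CompleteSpace H]
    (T₁ T₂ : H →L[𝕜] H) (h₁ : FiniteDimensional 𝕜 (LinearMap.range (T₁ : H →ₗ[𝕜] H)))
    (h₂ : FiniteDimensional 𝕜 (LinearMap.range (T₂ : H →ₗ[𝕜] H))) :
    (({B : H →L[𝕜] H | ∃ A : H →L[𝕜] H,
        FiniteDimensional 𝕜 (LinearMap.range (A : H →ₗ[𝕜] H)) ∧ B = T₁ ∘L A} =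
      {B : H →L[𝕜] H | ∃ A : H →L[𝕜] H,
        FiniteDimensional 𝕜 (LinearMap.range (A : H →ₗ[𝕜] H)) ∧ B = T₂ ∘L A}) ↔
      LinearMap.range (T₁ : H →ₗ[𝕜] H) = LinearMap.range (T₂ : H →ₗ[𝕜] H)) ∧
    (({B : H →L[𝕜] H | ∃ A : H →L[𝕜] H,
        FiniteDimensional 𝕜 (LinearMap.range (A : H →ₗ[𝕜] H)) ∧ B = A ∘L T₁} =
      {B : H →L[𝕜] H | ∃ A : H →L[𝕜] H,
        FiniteDimensional 𝕜 (LinearMap.range (A : H →ₗ[𝕜] H)) ∧ B = A ∘L T₂}) ↔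
      LinearMap.ker (T₁ : H →ₗ[𝕜] H) = LinearMap.ker (T₂ : H →ₗ[𝕜] H)) := by
  -- membership of Tᵢ in its own ideals
  have memL : ∀ (T : H →L[𝕜] H), FiniteDimensional 𝕜 (LinearMap.range (T : H →ₗ[𝕜] H)) →
      T ∈ {B : H →L[𝕜] H | ∃ A : H →L[𝕜] H,
        FiniteDimensional 𝕜 (LinearMap.range (A : H →ₗ[𝕜] H)) ∧ B = T ∘L A} := by
    intro T hT
    obtain ⟨S, hS, hSid⟩ := exists_pseudoinverse T hT
    refine ⟨S ∘L T, ?_, ?_⟩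
    · exact fd_range_comp S T hS
    · ext x; exact (hSid (T x) ⟨x, rfl⟩).symm
  have memR : ∀ (T : H →L[𝕜] H), FiniteDimensional 𝕜 (LinearMap.range (T : H →ₗ[𝕜] H)) →
      T ∈ {B : H →L[𝕜] H | ∃ A : H →L[𝕜] H,
        FiniteDimensional 𝕜 (LinearMap.range (A : H →ₗ[𝕜] H)) ∧ B = A ∘L T} := by
    intro T hT
    obtain ⟨S, hS, hSid⟩ := exists_pseudoinverse T hT
    refine ⟨T ∘L S, ?_, ?_⟩
    · exact fd_range_comp T S hT
    · ext x; exact (hSid (T x) ⟨x, rfl⟩).symm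
  constructor
  · constructor
    · intro hset
      apply le_antisymm
      · obtain ⟨A, hA, hEq⟩ := hset ▸ memL T₁ h₁
        rintro y ⟨x, rfl⟩
        exact ⟨A x, congrArg (· x) hEq.symm⟩
      · obtain ⟨A, hA, hEq⟩ := hset.symm ▸ memL T₂ h₂
        rintro y ⟨x, rfl⟩
        exact ⟨A x, congrArg (· x) hEq.symm⟩
    · intro hr
      exact le_antisymm (left_ideal_subset T₁ T₂ h₂ hr.le)
        (left_ideal_subset T₂ T₁ h₁ hr.ge)
  · constructor
    · intro hset
      apply le_antisymm
      · obtain ⟨A, hA, hEq⟩ := hset.symm ▸ memR T₂ h₂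
        intro x hx
        have : T₂ x = A (T₁ x) := congrArg (· x) hEq
        simp [LinearMap.mem_ker] at hx ⊢
        rw [this, hx, map_zero]
      · obtain ⟨A, hA, hEq⟩ := hset ▸ memR T₁ h₁
        intro x hx
        have : T₁ x = A (T₂ x) := congrArg (· x) hEq
        simp [LinearMap.mem_ker] at hx ⊢
        rw [this, hx, map_zero]
    · intro hk
      exact le_antisymm (right_ideal_subset T₁ T₂ h₂ hk.ge)
        (right_ideal_subset T₂ T₁ h₁ hk.le)
end
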